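/- arXiv:2307.03263 — 2 statements merged into one kernel-verified Lean document; each statement's English description precedes it below -/
import Mathlib

section
/- For α ∈ (0,1) and λ ≥ 0, the function t ↦ E_{α,1}(-λ t^α) on (0,∞) has derivative d/dt E_{α,1}(-λ t^α) = -λ t^{α-1} E_{α,α}(-λ t^α). -/
/-!
Writing `E_{α,1}(-λ s^α) = ∑ₖ cₖ s^{kα}` with `cₖ = (-λ)ᵏ / Γ(kα+1)`, the series may be
differentiated term by term on `(t/2, 2t)`: the differentiated terms are dominated by
`(k+1) |cₖ| Rᵏ` for a constant `R`, and these bounds are summable by the ratio test because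
`Γ(y+α)/Γ(y) → ∞` (a consequence of the log-convexity of `Γ`). Since `kα / Γ(kα+1) = 1 / Γ(kα)`,
shifting the index of the differentiated series produces `-λ t^{α-1} E_{α,α}(-λ t^α)`.
-/

/-- The real two-parameter Mittag-Leffler function `E_{α,β}(x) = ∑ₖ xᵏ / Γ(kα+β)`. -/
noncomputable def mittagLefflerReal (α β x : ℝ) : ℝ :=
  ∑' k : ℕ, x ^ k / Real.Gamma (k * α + β)

open Real Filter Set

namespace Real

theorem Gamma_add_one_le_rpow_mul_Gamma_add {y a : ℝ} (ha0 : 0 < a) (ha1 : a < 1)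
    (hy : 0 < y + a) : Gamma (y + 1) ≤ (y + a) ^ (1 - a) * Gamma (y + a) := by
  have hΓ := Gamma_pos_of_pos hy
  -- log-convexity of `Γ` between `y + a` and `y + a + 1`
  calc Gamma (y + 1) = Gamma (a * (y + a) + (1 - a) * (y + a + 1)) := by ring_nf
    _ ≤ Gamma (y + a) ^ a * Gamma (y + a + 1) ^ (1 - a) :=
      Gamma_mul_add_mul_le_rpow_Gamma_mul_rpow_Gamma hy (by linarith) ha0 (by linarith) (by ring)
    _ = (y + a) ^ (1 - a) * Gamma (y + a) := by
      rw [Gamma_add_one hy.ne', mul_rpow hy.le hΓ.le, mul_left_comm, ← rpow_add hΓ]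
      simp

theorem tendsto_Gamma_add_div_Gamma_atTop {a : ℝ} (ha0 : 0 < a) (ha1 : a < 1) :
    Tendsto (fun y => Gamma (y + a) / Gamma y) atTop atTop := by
  -- `Γ(y+a)/Γ(y) ≥ y (y+a)^(a-1) ≥ (y+a)^a / 2` once `y ≥ a`
  refine tendsto_atTop_mono' _ ?_ (((tendsto_rpow_atTop ha0).comp
    (tendsto_atTop_add_const_right _ a tendsto_id)).atTop_div_const two_pos)
  filter_upwards [eventually_ge_atTop a] with y hy
  have hy0 : 0 < y := by linarith
  have hya : 0 < y + a := by linarith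
  have hΓ := Gamma_pos_of_pos hy0
  have key := Gamma_add_one_le_rpow_mul_Gamma_add ha0 ha1 hya
  rw [Gamma_add_one hy0.ne'] at key
  have hsplit : (y + a) ^ a * (y + a) ^ (1 - a) = y + a := by
    rw [← rpow_add hya]; simp
  rw [Function.comp_apply, le_div_iff₀ hΓ]
  refine le_of_mul_le_mul_left ?_ hya
  calc (y + a) * ((y + a) ^ a / 2 * Gamma y) = (y + a) ^ a * ((y + a) / 2 * Gamma y) := by ring
    _ ≤ (y + a) ^ a * (y * Gamma y) := by gcongr; linarith
    _ ≤ (y + a) ^ a * ((y + a) ^ (1 - a) * Gamma (y + a)) := by gcongr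
    _ = (y + a) * Gamma (y + a) := by rw [← mul_assoc, hsplit]

end Real

theorem summable_natCast_add_one_mul_pow_div_Gamma {α : ℝ} (hα0 : 0 < α) (hα1 : α < 1)
    (β x : ℝ) : Summable fun k : ℕ => ((k : ℝ) + 1) * x ^ k / Gamma (k * α + β) := by
  have hlin : Tendsto (fun k : ℕ => (k : ℝ) * α + β) atTop atTop :=
    tendsto_atTop_add_const_right _ β (tendsto_natCast_atTop_atTop.atTop_mul_const hα0)
  refine summable_of_ratio_norm_eventually_le (r := 1 / 2) (by norm_num) ?_
  filter_upwards [hlin.eventually_gt_atTop 0,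
    ((tendsto_Gamma_add_div_Gamma_atTop hα0 hα1).comp hlin).eventually_ge_atTop (4 * |x|)]
    with k hy hratio
  set y := (k : ℝ) * α + β
  have hΓ := Gamma_pos_of_pos hy
  have hΓα := Gamma_pos_of_pos (add_pos hy hα0)
  have hsucc : ((k + 1 : ℕ) : ℝ) * α + β = y + α := by push_cast; ring
  rw [Function.comp_apply, le_div_iff₀ hΓ] at hratio
  rw [hsucc]
  simp only [norm_div, norm_mul, norm_pow, Real.norm_eq_abs, abs_of_pos hΓ, abs_of_pos hΓα,
    Nat.cast_succ, abs_of_nonneg (by positivity : (0:ℝ) ≤ k + 1 + 1),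
    abs_of_nonneg (by positivity : (0:ℝ) ≤ k + 1)]
  rw [div_le_iff₀ hΓα, pow_succ]
  calc (k + 1 + 1) * (|x| ^ k * |x|) ≤ 2 * (k + 1) * (|x| ^ k * |x|) :=
        mul_le_mul_of_nonneg_right (by linarith) (by positivity)
    _ = 1 / 2 * ((k + 1) * |x| ^ k / Gamma y) * (4 * |x| * Gamma y) := by
        field_simp; ring
    _ ≤ 1 / 2 * ((k + 1) * |x| ^ k / Gamma y) * Gamma (y + α) := by gcongr

theorem summable_pow_div_Gamma {α : ℝ} (hα0 : 0 < α) (hα1 : α < 1) (β x : ℝ) :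
    Summable fun k : ℕ => x ^ k / Gamma (k * α + β) :=
  (summable_natCast_add_one_mul_pow_div_Gamma hα0 hα1 β ‖x‖).norm.of_norm_bounded fun k => by
    rw [norm_div, norm_div, norm_mul, norm_pow, norm_pow, norm_norm]
    refine div_le_div_of_nonneg_right (le_mul_of_one_le_left (by positivity) ?_) (norm_nonneg _)
    rw [Real.norm_of_nonneg (by positivity)]
    exact le_add_of_nonneg_left k.cast_nonneg

theorem hasDerivAt_tsum_mul_rpow {α t : ℝ} {c : ℕ → ℝ} (hα : 0 ≤ α)
    (hc : ∀ R, Summable fun k : ℕ => ((k : ℝ) + 1) * |c k| * R ^ k) (ht : 0 < t) :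
    HasDerivAt (fun s => ∑' k, c k * s ^ ((k : ℝ) * α))
      (∑' k, c k * ((k : ℝ) * α * t ^ ((k : ℝ) * α - 1))) t := by
  set R := (2 * t) ^ α
  have hpow : ∀ {y : ℝ}, 0 ≤ y → ∀ k : ℕ, y ^ ((k : ℝ) * α) = (y ^ α) ^ k := fun hy k => by
    rw [mul_comm, rpow_mul_natCast hy]
  have hderiv : ∀ (k : ℕ), ∀ y ∈ Ioo (t / 2) (2 * t),
      HasDerivAt (fun s => c k * s ^ ((k : ℝ) * α))
        (c k * ((k : ℝ) * α * y ^ ((k : ℝ) * α - 1))) y := fun k y hy =>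
    (hasDerivAt_rpow_const (Or.inl (by linarith [hy.1] : y ≠ 0))).const_mul (c k)
  have hbound : ∀ (k : ℕ), ∀ y ∈ Ioo (t / 2) (2 * t),
      ‖c k * ((k : ℝ) * α * y ^ ((k : ℝ) * α - 1))‖ ≤ 2 * α / t * ((k + 1) * |c k| * R ^ k) := by
    intro k y hy
    have hy0 : 0 < y := by linarith [hy.1]
    have hyR : y ^ ((k : ℝ) * α) ≤ R ^ k := by
      rw [hpow hy0.le]
      exact pow_le_pow_left₀ (by positivity) (rpow_le_rpow hy0.le hy.2.le hα) k
    have hinv : y⁻¹ ≤ 2 / t := by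
      rw [inv_le_comm₀ hy0 (by positivity), inv_div]
      linarith [hy.1]
    rw [rpow_sub_one hy0.ne', div_eq_mul_inv, norm_mul, Real.norm_eq_abs,
      Real.norm_of_nonneg (by positivity)]
    calc |c k| * (k * α * (y ^ ((k : ℝ) * α) * y⁻¹))
        ≤ |c k| * ((k + 1) * α * (R ^ k * (2 / t))) := by
          gcongr
          linarith
      _ = 2 * α / t * ((k + 1) * |c k| * R ^ k) := by ring
  have hsummable : Summable fun k => c k * t ^ ((k : ℝ) * α) :=
    (hc (t ^ α)).of_norm_bounded fun k => by
      rw [hpow ht.le, norm_mul, Real.norm_eq_abs, Real.norm_of_nonneg (by positivity), mul_assoc]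
      exact le_mul_of_one_le_left (by positivity) (le_add_of_nonneg_left k.cast_nonneg)
  have htmem : t ∈ Ioo (t / 2) (2 * t) := ⟨by linarith, by linarith⟩
  exact hasDerivAt_tsum_of_isPreconnected ((hc R).mul_left _) isOpen_Ioo isPreconnected_Ioo
    hderiv hbound htmem hsummable htmem

theorem hasSum_pow_div_Gamma_mul_deriv_rpow {α : ℝ} (hα0 : 0 < α) (hα1 : α < 1) (x : ℝ) {t : ℝ}
    (ht : 0 < t) :
    HasSum (fun k : ℕ => x ^ k / Gamma (k * α + 1) * (k * α * t ^ ((k : ℝ) * α - 1)))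
      (x * t ^ (α - 1) * mittagLefflerReal α α (x * t ^ α)) := by
  have hshift : ∀ j : ℕ, x ^ (j + 1) / Gamma (((j + 1 : ℕ) : ℝ) * α + 1) *
      (((j + 1 : ℕ) : ℝ) * α * t ^ (((j + 1 : ℕ) : ℝ) * α - 1)) =
      x * t ^ (α - 1) * ((x * t ^ α) ^ j / Gamma (j * α + α)) := by
    intro j
    have hjα : ((j + 1 : ℕ) : ℝ) * α = j * α + α := by push_cast; ring
    have hjα0 : 0 < (j : ℝ) * α + α := by positivity
    rw [hjα, Gamma_add_one hjα0.ne', add_sub_assoc, rpow_add ht, mul_comm (j : ℝ) α,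
      rpow_mul_natCast ht.le]
    field_simp
    ring
  rw [← hasSum_nat_add_iff' 1]
  simp only [Finset.range_one, Finset.sum_singleton, Nat.cast_zero, zero_mul, mul_zero, sub_zero,
    hshift]
  exact (summable_pow_div_Gamma hα0 hα1 α (x * t ^ α)).hasSum.mul_left (x * t ^ (α - 1))

theorem stmt_2_general (α lam t : ℝ) (hα : α ∈ Set.Ioo 0 1) (ht : 0 < t) :
    HasDerivAt (fun s : ℝ => mittagLefflerReal α 1 (-(lam * s ^ α)))
      (-(lam * t ^ (α - 1) * mittagLefflerReal α α (-(lam * t ^ α)))) t := by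
  obtain ⟨hα0, hα1⟩ := hα
  set c : ℕ → ℝ := fun k => (-lam) ^ k / Gamma (k * α + 1)
  have hc : ∀ R, Summable fun k : ℕ => ((k : ℝ) + 1) * |c k| * R ^ k := fun R =>
    (summable_natCast_add_one_mul_pow_div_Gamma hα0 hα1 1 (|lam| * R)).congr fun k => by
      rw [abs_div, abs_pow, abs_neg, abs_of_pos (Gamma_pos_of_pos (by positivity))]
      ring
  have hseries : (fun s => mittagLefflerReal α 1 (-(lam * s ^ α))) =ᶠ[nhds t]
      fun s => ∑' k, c k * s ^ ((k : ℝ) * α) := by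
    filter_upwards [lt_mem_nhds ht] with s hs
    refine tsum_congr fun k => ?_
    rw [← neg_mul, mul_pow, ← rpow_mul_natCast hs.le, mul_comm α, div_mul_eq_mul_div]
  have h := (hasDerivAt_tsum_mul_rpow hα0.le hc ht).congr_of_eventuallyEq hseries
  rwa [(hasSum_pow_div_Gamma_mul_deriv_rpow hα0 hα1 (-lam) ht).tsum_eq, neg_mul, neg_mul,
    neg_mul] at h

/-- For `α ∈ (0,1)`, `λ ≥ 0` and `t > 0`, `d/dt E_{α,1}(-λ tᵅ) = -λ t^{α-1} E_{α,α}(-λ tᵅ)`. -/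
theorem stmt_2 (α lam t : ℝ) (hα : α ∈ Set.Ioo 0 1) (hlam : 0 ≤ lam) (ht : 0 < t) :
    HasDerivAt (fun s : ℝ => mittagLefflerReal α 1 (-(lam * s ^ α)))
      (-(lam * t ^ (α - 1) * mittagLefflerReal α α (-(lam * t ^ α)))) t :=
  stmt_2_general α lam t hα ht
end

section
/- Let α ∈ (0,1) and λ > 0. The Laplace transform of t ↦ E_{α,1}(-λ t^α) exists for all complex z with Re z > 0 and equals z^{α-1}/(z^α + λ), where z^α denotes the principal branch. -/
open MeasureTheory

open Filter Set Topology Real Nat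

theorem Real.factorial_floor_le_Gamma_add_one {s : ℝ} (hs : 1 ≤ s) :
    (⌊s⌋₊ ! : ℝ) ≤ Gamma (s + 1) := by
  have hfloor : (1 : ℝ) ≤ ⌊s⌋₊ := by exact_mod_cast Nat.le_floor (by exact_mod_cast hs)
  rw [← Gamma_nat_eq_factorial]
  exact Gamma_strictMonoOn_Ici.monotoneOn (by simp only [mem_Ici]; linarith)
    (by simp only [mem_Ici]; linarith)
    (by linarith [Nat.floor_le (zero_le_one.trans hs)])

theorem Real.rpow_le_mul_exp_mul_Gamma_add_one {y s : ℝ} (hy : 1 ≤ y) (hs : 1 ≤ s) :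
    y ^ s ≤ y * exp y * Gamma (s + 1) := by
  set n := ⌊s⌋₊
  calc y ^ s ≤ y ^ ((n : ℝ) + 1) :=
        rpow_le_rpow_of_exponent_le hy (Nat.lt_floor_add_one s).le
    _ = y * (y ^ n / n ! * n !) := by
        rw [rpow_add_one (by linarith), rpow_natCast, div_mul_cancel₀ _ (by positivity)]; ring
    _ ≤ y * (exp y * Gamma (s + 1)) := by
        gcongr
        · exact pow_div_factorial_le_exp y (by linarith) n
        · exact factorial_floor_le_Gamma_add_one hs
    _ = y * exp y * Gamma (s + 1) := by ring

theorem summable_pow_div_Gamma_mul_add_one {α : ℝ} (hα : 0 < α) (x : ℝ) :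
    Summable fun k : ℕ => x ^ k / Gamma (k * α + 1) := by
  -- geometric majorant of ratio 1/2: `(2|x|+1)^k = Y^(kα) ≤ Y e^Y Γ(kα+1)` once `kα ≥ 1`
  set Y := (2 * |x| + 1) ^ α⁻¹
  have hY : 1 ≤ Y := one_le_rpow (by linarith [abs_nonneg x]) (by positivity)
  refine Summable.of_norm_bounded_eventually_nat
    ((summable_geometric_two).mul_left (Y * exp Y)) ?_
  have hkα : ∀ᶠ k : ℕ in atTop, 1 ≤ (k : ℝ) * α :=
    ((tendsto_natCast_atTop_atTop (R := ℝ)).atTop_mul_const hα).eventually_ge_atTop 1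
  filter_upwards [hkα] with k hk
  have hΓ : 0 < Gamma (k * α + 1) := Gamma_pos_of_pos (by positivity)
  have hpow : (2 * |x| + 1) ^ k = Y ^ ((k : ℝ) * α) := by
    rw [← rpow_natCast, ← rpow_mul (by positivity), mul_comm (k : ℝ), ← mul_assoc,
      inv_mul_cancel₀ hα.ne', one_mul]
  rw [norm_div, norm_pow, Real.norm_eq_abs, Real.norm_of_nonneg hΓ.le, div_le_iff₀ hΓ]
  calc |x| ^ k ≤ (1 / 2) ^ k * (2 * |x| + 1) ^ k := by
        rw [← mul_pow]; gcongr; linarith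
    _ ≤ (1 / 2) ^ k * (Y * exp Y * Gamma (k * α + 1)) := by
        rw [hpow]; gcongr; exact rpow_le_mul_exp_mul_Gamma_add_one hY hk
    _ = Y * exp Y * (1 / 2) ^ k * Gamma (k * α + 1) := by ring

theorem measurable_mittagLefflerReal {α : ℝ} (hα : 0 < α) :
    Measurable (mittagLefflerReal α 1) :=
  measurable_of_tendsto_metrizable' atTop (fun n => by fun_prop)
    (tendsto_pi_nhds.2 fun x => (summable_pow_div_Gamma_mul_add_one hα x).hasSum.tendsto_sum_nat)

noncomputable def laplace (u : ℝ → ℂ) (z : ℂ) : ℂ :=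
  ∫ t in Ioi (0 : ℝ), Complex.exp (-z * t) * u t

theorem norm_cexp_neg_mul_mul_le {z w : ℂ} {σ t C : ℝ} (hσ : σ ≤ z.re) (ht : 0 ≤ t)
    (hw : ‖w‖ ≤ C) : ‖Complex.exp (-z * t) * w‖ ≤ C * exp (-σ * t) := by
  have hre : (-z * t).re = -z.re * t := by simp
  rw [norm_mul, Complex.norm_exp, hre, mul_comm C]
  gcongr

theorem integrableOn_cexp_neg_mul_mul {u : ℝ → ℂ} {C : ℝ}
    (hu : AEStronglyMeasurable u (volume.restrict (Ioi 0))) (hC : ∀ t, 0 < t → ‖u t‖ ≤ C)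
    {z : ℂ} (hz : 0 < z.re) : IntegrableOn (fun t : ℝ => Complex.exp (-z * t) * u t) (Ioi 0) := by
  refine Integrable.mono' ((exp_neg_integrableOn_Ioi 0 hz).const_mul C) ?_ ?_
  · exact ((by fun_prop : Continuous fun t : ℝ => Complex.exp (-z * t)).aestronglyMeasurable).mul hu
  · filter_upwards [ae_restrict_mem measurableSet_Ioi] with t ht
    exact norm_cexp_neg_mul_mul_le le_rfl (le_of_lt ht) (hC t ht)

theorem differentiableOn_laplace {u : ℝ → ℂ} {C : ℝ}
    (hu : AEStronglyMeasurable u (volume.restrict (Ioi 0))) (hC : ∀ t, 0 < t → ‖u t‖ ≤ C) :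
    DifferentiableOn ℂ (laplace u) {z | 0 < z.re} := by
  intro z₀ hz₀
  have hσ : 0 < z₀.re / 2 := half_pos hz₀
  refine (hasDerivAt_integral_of_dominated_loc_of_deriv_le (μ := volume.restrict (Ioi 0))
    (F := fun z t => Complex.exp (-z * t) * u t)
    (F' := fun z t => -(t : ℂ) * (Complex.exp (-z * t) * u t))
    (bound := fun t => C * (t * exp (-(z₀.re / 2) * t)))
    (Metric.ball_mem_nhds z₀ hσ) ?_ (integrableOn_cexp_neg_mul_mul hu hC hz₀) ?_ ?_ ?_ ?_)
    |>.2.differentiableAt.differentiableWithinAt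
  · exact Eventually.of_forall fun z => (((by fun_prop : Continuous fun t : ℝ =>
      Complex.exp (-z * t)).aestronglyMeasurable).mul hu)
  · exact ((by fun_prop : Continuous fun t : ℝ =>
      -(t : ℂ) * Complex.exp (-z₀ * t)).aestronglyMeasurable.mul hu).congr
      (Eventually.of_forall fun t => by simp only [Pi.mul_apply, mul_assoc])
  · filter_upwards [ae_restrict_mem measurableSet_Ioi] with t ht z hz
    have hre : z₀.re / 2 ≤ z.re := by
      have := (abs_le.1 ((Complex.abs_re_le_norm (z - z₀)).trans (mem_ball_iff_norm.1 hz).le)).1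
      simp only [Complex.sub_re] at this
      linarith
    rw [norm_mul, norm_neg, Complex.norm_real, Real.norm_of_nonneg (le_of_lt ht), mul_left_comm]
    exact mul_le_mul_of_nonneg_left (norm_cexp_neg_mul_mul_le hre (le_of_lt ht) (hC t ht)) ht.le
  · have := (integrableOn_rpow_mul_exp_neg_mul_rpow (by norm_num : (-1 : ℝ) < 1) one_pos
      hσ).const_mul C
    simpa only [rpow_one] using this
  · refine Eventually.of_forall fun t z _ => ?_
    have : HasDerivAt (fun z : ℂ => -z * t) (-(t : ℂ)) z := by
      simpa using (hasDerivAt_id z).neg.mul_const (t : ℂ)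
    simpa [mul_assoc, mul_comm, mul_left_comm] using this.cexp.mul_const (u t)

theorem laplace_ofReal (g : ℝ → ℝ) (x : ℝ) :
    laplace (fun t => (g t : ℂ)) x = ((∫ t in Ioi 0, exp (-(x * t)) * g t : ℝ) : ℂ) := by
  rw [laplace, ← integral_complex_ofReal]
  push_cast
  simp only [neg_mul]

theorem integrableOn_and_integral_exp_neg_mul_mul_rpow_pow {α x : ℝ} (hα : 0 ≤ α) (hx : 0 < x)
    (c : ℝ) (k : ℕ) :
    IntegrableOn (fun t => exp (-(x * t)) * ((c * t ^ α) ^ k / Gamma (k * α + 1))) (Ioi 0) ∧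
    ∫ t in Ioi 0, exp (-(x * t)) * ((c * t ^ α) ^ k / Gamma (k * α + 1)) =
      c ^ k / x ^ ((k : ℝ) * α + 1) := by
  have hΓ : 0 < Gamma (k * α + 1) := Gamma_pos_of_pos (by positivity)
  have heq : EqOn (fun t => exp (-(x * t)) * ((c * t ^ α) ^ k / Gamma (k * α + 1)))
      (fun t => c ^ k / Gamma (k * α + 1) * (t ^ ((k : ℝ) * α) * exp (-(x * t)))) (Ioi 0) :=
    fun t ht => by
      dsimp only
      rw [mul_pow, ← rpow_natCast (t ^ α), ← rpow_mul (le_of_lt ht), mul_comm α]; ring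
  have hint := integrableOn_rpow_mul_exp_neg_mul_rpow (s := (k : ℝ) * α) (p := 1)
    (by linarith [mul_nonneg k.cast_nonneg hα]) one_pos hx
  simp only [rpow_one, neg_mul] at hint
  refine ⟨IntegrableOn.congr_fun (hint.const_mul _) (fun t ht => (heq ht).symm) measurableSet_Ioi,
    ?_⟩
  have hΓint := integral_rpow_mul_exp_neg_mul_Ioi (a := k * α + 1) (by positivity) hx
  rw [add_sub_cancel_right] at hΓint
  rw [setIntegral_congr_fun measurableSet_Ioi heq, integral_const_mul, hΓint, one_div,
    inv_rpow hx.le]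
  field_simp

theorem integral_exp_neg_mul_mittagLefflerReal {α x : ℝ} (hα : 0 ≤ α) (hx : 0 < x) {c : ℝ}
    (hc : |c| < x ^ α) :
    ∫ t in Ioi 0, exp (-(x * t)) * mittagLefflerReal α 1 (c * t ^ α) =
      x ^ (α - 1) / (x ^ α - c) := by
  have hxα : 0 < x ^ α := rpow_pos_of_pos hx α
  have hgeom : ∀ (c : ℝ) (k : ℕ), c ^ k / x ^ ((k : ℝ) * α + 1) = x⁻¹ * (c / x ^ α) ^ k := by
    intro c k
    rw [rpow_add_one hx.ne', mul_comm (k : ℝ), rpow_mul hx.le, rpow_natCast, div_pow]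
    field_simp
  have hnorm : ∀ k : ℕ, ∫ t in Ioi 0, ‖exp (-(x * t)) * ((c * t ^ α) ^ k / Gamma (k * α + 1))‖ =
      |c| ^ k / x ^ ((k : ℝ) * α + 1) := by
    intro k
    rw [← (integrableOn_and_integral_exp_neg_mul_mul_rpow_pow hα hx |c| k).2]
    refine setIntegral_congr_fun measurableSet_Ioi fun t ht => ?_
    have hΓ : 0 < Gamma (k * α + 1) := Gamma_pos_of_pos (by positivity)
    simp only [norm_mul, norm_div, norm_pow, Real.norm_eq_abs, abs_exp, abs_of_pos hΓ,
      abs_of_pos (rpow_pos_of_pos ht α)]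
  have hsum := integral_tsum_of_summable_integral_norm
    (fun k => (integrableOn_and_integral_exp_neg_mul_mul_rpow_pow hα hx c k).1) ?_
  · simp only [mittagLefflerReal, ← tsum_mul_left]
    rw [← hsum]
    simp only [(integrableOn_and_integral_exp_neg_mul_mul_rpow_pow hα hx c _).2, hgeom,
      tsum_mul_left]
    rw [tsum_geometric_of_norm_lt_one, rpow_sub_one hx.ne']
    · field_simp
    · rwa [norm_div, Real.norm_eq_abs, Real.norm_of_nonneg hxα.le, div_lt_one hxα]
  · simp only [hnorm, hgeom]
    exact (summable_geometric_of_lt_one (by positivity) ((div_lt_one hxα).2 hc)).mul_left _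

theorem Complex.re_cpow_ofReal_pos {z : ℂ} (hz : 0 < z.re) {a : ℝ} (ha₀ : 0 ≤ a) (ha₁ : a ≤ 1) :
    0 < (z ^ (a : ℂ)).re := by
  have hz₀ : z ≠ 0 := fun h => by simp [h] at hz
  have harg : |z.arg| < π / 2 := abs_arg_lt_pi_div_two_iff.2 (Or.inl hz)
  have hmul : |z.arg * a| < π / 2 := by
    rw [abs_mul, abs_of_nonneg ha₀]
    nlinarith [abs_nonneg z.arg]
  rw [cpow_ofReal_re]
  exact mul_pos (rpow_pos_of_pos (norm_pos_iff.2 hz₀) a) (cos_pos_of_mem_Ioo (abs_lt.1 hmul))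

theorem differentiableOn_cpow_sub_one_div_cpow_add {α : ℝ} (hα₀ : 0 ≤ α) (hα₁ : α ≤ 1) {c : ℝ}
    (hc : 0 ≤ c) :
    DifferentiableOn ℂ (fun z : ℂ => z ^ ((α : ℂ) - 1) / (z ^ (α : ℂ) + c)) {z | 0 < z.re} := by
  intro z hz
  have hslit : z ∈ Complex.slitPlane := Or.inl hz
  have hpow := differentiableAt_id.cpow_const (c := (α : ℂ)) hslit
  refine ((differentiableAt_id.cpow_const hslit).div (hpow.add_const _) ?_).differentiableWithinAt
  intro h
  have := congrArg Complex.re h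
  simp only [id, Complex.add_re, Complex.ofReal_re, Complex.zero_re] at this
  linarith [Complex.re_cpow_ofReal_pos hz hα₀ hα₁]

theorem eqOn_re_pos_of_eventually_eq_atTop {f g : ℂ → ℂ} (hf : DifferentiableOn ℂ f {z | 0 < z.re})
    (hg : DifferentiableOn ℂ g {z | 0 < z.re}) (hfg : ∀ᶠ x : ℝ in atTop, f x = g x) :
    EqOn f g {z | 0 < z.re} := by
  have hU : IsOpen {z : ℂ | 0 < z.re} := isOpen_lt continuous_const Complex.continuous_re
  obtain ⟨a, ha⟩ := eventually_atTop.1 hfg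
  set b := max a 0 + 1
  have hb : 0 < b := by positivity
  refine (hf.analyticOnNhd hU).eqOn_of_preconnected_of_frequently_eq (hg.analyticOnNhd hU)
    (convex_halfSpace_re_gt 0).isPreconnected (z₀ := (b : ℂ)) (by simpa using hb) ?_
  have hmap : Tendsto ((↑) : ℝ → ℂ) (𝓝[>] b) (𝓝[≠] (b : ℂ)) :=
    tendsto_nhdsWithin_of_tendsto_nhds_of_eventually_within _
      (Complex.continuous_ofReal.continuousAt.tendsto.mono_left nhdsWithin_le_nhds)
      (eventually_nhdsWithin_of_forall fun t ht => by simpa using (ne_of_gt ht))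
  refine hmap.frequently (Eventually.frequently ?_)
  filter_upwards [self_mem_nhdsWithin] with t (ht : b < t)
  exact ha t (by linarith [le_max_left a 0])

/-- For `α ∈ (0,1)`, `λ > 0`, assuming the standard bound `|E_{α,1}(-x)| ≤ C/(1+x)`,
the Laplace transform of `t ↦ E_{α,1}(-λ tᵅ)` exists for `Re z > 0` and equals
`z^{α-1}/(zᵅ + λ)` (principal branch). -/
theorem stmt_5 (α lam C : ℝ) (hα : α ∈ Set.Ioo 0 1) (hlam : 0 < lam)
    (hC : ∀ x : ℝ, 0 ≤ x → |mittagLefflerReal α 1 (-x)| ≤ C / (1 + x)) :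
    ∀ z : ℂ, 0 < z.re →
      IntegrableOn (fun t : ℝ =>
          Complex.exp (-z * t) * (mittagLefflerReal α 1 (-(lam * t ^ α)) : ℂ)) (Set.Ioi 0) ∧
      ∫ t in Set.Ioi (0:ℝ),
          Complex.exp (-z * t) * (mittagLefflerReal α 1 (-(lam * t ^ α)) : ℂ) =
        z ^ ((α : ℂ) - 1) / (z ^ (α : ℂ) + (lam : ℂ)) := by
  obtain ⟨hα₀, hα₁⟩ := hα
  set g : ℝ → ℝ := fun t => mittagLefflerReal α 1 (-(lam * t ^ α))
  have hC₀ : 0 ≤ C := by simpa using (abs_nonneg _).trans (hC 0 le_rfl)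
  have hg : AEStronglyMeasurable (fun t => (g t : ℂ)) (volume.restrict (Ioi 0)) :=
    (Complex.measurable_ofReal.comp ((measurable_mittagLefflerReal hα₀).comp
      (by fun_prop))).aestronglyMeasurable
  have hbound : ∀ t, 0 < t → ‖(g t : ℂ)‖ ≤ C := fun t ht => by
    have hnonneg : 0 ≤ lam * t ^ α := by positivity
    rw [Complex.norm_real, Real.norm_eq_abs]
    exact (hC _ hnonneg).trans (div_le_self hC₀ (by linarith))
  have hlaplace : EqOn (laplace fun t => (g t : ℂ))
      (fun z => z ^ ((α : ℂ) - 1) / (z ^ (α : ℂ) + lam)) {z | 0 < z.re} := by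
    refine eqOn_re_pos_of_eventually_eq_atTop (differentiableOn_laplace hg hbound)
      (differentiableOn_cpow_sub_one_div_cpow_add hα₀.le hα₁.le hlam.le) ?_
    filter_upwards [eventually_gt_atTop 0, (tendsto_rpow_atTop hα₀).eventually_gt_atTop lam]
      with x hx hlx
    have hc : |-lam| < x ^ α := by rwa [abs_neg, abs_of_pos hlam]
    simp only [laplace_ofReal, g, neg_mul_eq_neg_mul lam,
      integral_exp_neg_mul_mittagLefflerReal hα₀.le hx hc]
    push_cast [Complex.ofReal_cpow hx.le]
    ring
  exact fun z hz => ⟨integrableOn_cexp_neg_mul_mul hg hbound hz, hlaplace hz⟩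
end
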